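/- arXiv:2410.02151 — 2 statements merged into one kernel-verified Lean document; each statement's English description precedes it below -/
import Mathlib

section
/- (Lemma on the map Φ_{N,net} with approximate nonlinearity, self-mapping part.) Let d ≥ 1, let D ⊆ ℝ^d be a bounded measurable set with positive finite Lebesgue measure, and let T > 0, C_L > 0, R > 0, M' > 0, ε ∈ (0,1]. Let F : ℝ → ℝ satisfy |F(z)| ≤ C_F |z|^p for all z ∈ ℝ with p > 1, C_F > 0. Let F_net : ℝ → ℝ be measurable with sup_{|z| ≤ M'} |F(z) − F_net(z)| ≤ ε. Let G_N : (0,T)×D×D → ℝ be measurable with ess sup_{(t,x)∈(0,T)×D} ∫₀ᵗ ∫_D |G_N(t−τ,x,y)| dy dτ ≤ 2 C_L T and ess sup_{(t,x)∈(0,T)×D} ∫_D |G_N(t,x,y)| dy ≤ 2 C_L. Assume 2 C_L R + 2 C_L T (1 + C_F (M')^p) ≤ M'. Then for every u₀ ∈ L^∞(D) with ‖u₀‖_{L^∞} ≤ R and every measurable u : (0,T)×D → ℝ with ess sup_{(t,x)} |u(t,x)| ≤ M', the function Φ_{N,net,u₀}[u](t,x) := ∫_D G_N(t,x,y) u₀(y)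 dy + ∫₀ᵗ ∫_D G_N(t−τ,x,y) F_net(u(τ,y)) dy dτ satisfies ess sup_{(t,x)∈(0,T)×D} |Φ_{N,net,u₀}[u](t,x)| ≤ M'. -/
open MeasureTheory ENNReal Set Filter

noncomputable section

/-- Euclidean space `ℝ^d`. -/
abbrev Esp (d : ℕ) := EuclideanSpace ℝ (Fin d)

/-- `L^q` seminorm (with exponent `q ∈ [1,∞]` as an `ℝ≥0∞`) of an `ℝ≥0∞`-valued function. -/
def eLp {α : Type*} [MeasurableSpace α] (μ : Measure α) (q : ℝ≥0∞) (f : α → ℝ≥0∞) : ℝ≥0∞ :=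
  if q = ⊤ then essSup f μ else (∫⁻ a, f a ^ q.toReal ∂μ) ^ (1 / q.toReal)

/-- The `L^q(D)` norm of `f : ℝ^d → ℝ`. -/
def lqNorm {d : ℕ} (D : Set (Esp d)) (q : ℝ≥0∞) (f : Esp d → ℝ) : ℝ≥0∞ :=
  eLp (volume.restrict D) q fun x => (‖f x‖₊ : ℝ≥0∞)

/-- The mixed `L^r(0,T;L^s(D))` norm of `u : (0,T) × D → ℝ`. -/
def mixedNorm {d : ℕ} (D : Set (Esp d)) (T : ℝ) (r s : ℝ≥0∞) (u : ℝ → Esp d → ℝ) : ℝ≥0∞ :=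
  eLp (volume.restrict (Ioo (0 : ℝ) T)) r fun t => lqNorm D s (u t)

/-- `1/r` as a real number, with the convention `1/∞ = 0`. -/
def invE (r : ℝ≥0∞) : ℝ := (1 / r).toReal

/-- The Duhamel map `Φ_{u₀}` associated with kernel `G`, nonlinearity `F` and data `u₀`. -/
def duhamel {d : ℕ} (D : Set (Esp d)) (G : ℝ → Esp d → Esp d → ℝ) (F : ℝ → ℝ)
    (u₀ : Esp d → ℝ) (u : ℝ → Esp d → ℝ) : ℝ → Esp d → ℝ := fun t x =>
  (∫ y in D, G t x y * u₀ y) + ∫ τ in Ioo (0 : ℝ) t, ∫ y in D, G (t - τ) x y * F (u τ y)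

/-- The restricted product measure on `(0,T) × D`. -/
def prodTD {d : ℕ} (D : Set (Esp d)) (T : ℝ) : Measure (ℝ × Esp d) :=
  (volume.restrict (Ioo (0 : ℝ) T)).prod (volume.restrict D)

/-- The `L^∞((0,T) × D)` norm (essential supremum over the product measure). -/
def essSupNorm {d : ℕ} (D : Set (Esp d)) (T : ℝ) (u : ℝ → Esp d → ℝ) : ℝ≥0∞ :=
  essSup (fun q : ℝ × Esp d => (‖u q.1 q.2‖₊ : ℝ≥0∞)) (prodTD D T)

/-- Assumption 1: smoothing estimate for the kernel `G`. -/
def SmoothingEstimate {d : ℕ} (D : Set (Esp d)) (G : ℝ → Esp d → Esp d → ℝ)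
    (C_L ν : ℝ) : Prop :=
  ∀ q₁ q₂ : ℝ≥0∞, 1 ≤ q₁ → q₁ ≤ q₂ → ∀ t ∈ Ioc (0 : ℝ) 1, ∀ g : Esp d → ℝ, Measurable g →
    lqNorm D q₂ (fun x => ∫ y in D, G t x y * g y) ≤
      ENNReal.ofReal (C_L * t ^ (-(ν * (invE q₁ - invE q₂)))) * lqNorm D q₁ g

/-- Assumption 2 on the nonlinearity `F`. -/
def NonlinearityAssumption (F : ℝ → ℝ) (C_F p : ℝ) : Prop :=
  ContDiff ℝ 1 F ∧ F 0 = 0 ∧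
    ∀ z₁ z₂ : ℝ, |F z₁ - F z₂| ≤ C_F * (max |z₁| |z₂|) ^ (p - 1) * |z₁ - z₂|

/-- Iterated mixed norm `‖‖K(t−τ,x,y)‖_{L^{r'}_τ(0,t;L^{s'}_y)}‖_{L^r_t(0,T;L^s_x)}`. -/
def kernelNorm₁ {d : ℕ} (D : Set (Esp d)) (T : ℝ) (r s r' s' : ℝ≥0∞)
    (K : ℝ → Esp d → Esp d → ℝ) : ℝ≥0∞ :=
  eLp (volume.restrict (Ioo (0 : ℝ) T)) r fun t =>
    eLp (volume.restrict D) s fun x =>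
      eLp (volume.restrict (Ioo (0 : ℝ) t)) r' fun τ =>
        eLp (volume.restrict D) s' fun y => (‖K (t - τ) x y‖₊ : ℝ≥0∞)

/-- Iterated mixed norm `‖‖K(t,x,·)‖_{L^{s'}_y(D)}‖_{L^r_t(0,T;L^s_x)}`. -/
def kernelNorm₂ {d : ℕ} (D : Set (Esp d)) (T : ℝ) (r s s' : ℝ≥0∞)
    (K : ℝ → Esp d → Esp d → ℝ) : ℝ≥0∞ :=
  eLp (volume.restrict (Ioo (0 : ℝ) T)) r fun t =>
    eLp (volume.restrict D) s fun x =>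
      eLp (volume.restrict D) s' fun y => (‖K t x y‖₊ : ℝ≥0∞)

/-! On `(0,T) × D`, almost everywhere, the two Duhamel terms are bounded by the `L¹` norms of the
kernel (at most `2 C_L` and `2 C_L T`) times `‖u₀‖_∞ ≤ R` and `sup_{|z| ≤ M'} |F_net z|`. The
latter is at most `C_F M'^p + ε ≤ 1 + C_F M'^p`, so the smallness condition is exactly what keeps
the sum below `M'`. -/

section KernelBounds

variable {α β : Type*} [MeasurableSpace α] [MeasurableSpace β] {𝕜 : Type*} [RCLike 𝕜]

theorem ae_le_of_essSup_le {μ : Measure α} {f : α → ℝ≥0∞} {c : ℝ≥0∞} (h : essSup f μ ≤ c) :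
    ∀ᵐ a ∂μ, f a ≤ c :=
  (ENNReal.ae_le_essSup f).mono fun _ ha => ha.trans h

theorem lintegral_enorm_mul_le {ν : Measure β} (k : β → 𝕜) {g : β → 𝕜} {b : ℝ≥0∞} (hb : b ≠ ⊤)
    (hg : ∀ᵐ y ∂ν, ‖g y‖ₑ ≤ b) :
    ∫⁻ y, ‖k y * g y‖ₑ ∂ν ≤ (∫⁻ y, ‖k y‖ₑ ∂ν) * b :=
  calc ∫⁻ y, ‖k y * g y‖ₑ ∂ν = ∫⁻ y, ‖k y‖ₑ * ‖g y‖ₑ ∂ν := by simp only [enorm_mul]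
    _ ≤ ∫⁻ y, ‖k y‖ₑ * b ∂ν := lintegral_mono_ae (hg.mono fun _ hy => mul_le_mul_right hy _)
    _ = (∫⁻ y, ‖k y‖ₑ ∂ν) * b := lintegral_mul_const' b _ hb

theorem enorm_integral_mul_le {ν : Measure β} (k : β → 𝕜) {g : β → 𝕜} {b : ℝ≥0∞} (hb : b ≠ ⊤)
    (hg : ∀ᵐ y ∂ν, ‖g y‖ₑ ≤ b) :
    ‖∫ y, k y * g y ∂ν‖ₑ ≤ (∫⁻ y, ‖k y‖ₑ ∂ν) * b :=
  (enorm_integral_le_lintegral_enorm _).trans (lintegral_enorm_mul_le k hb hg)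

theorem enorm_integral_integral_mul_le {μ : Measure α} {ν : Measure β} (k : α → β → 𝕜)
    {g : α → β → 𝕜} {b : ℝ≥0∞} (hb : b ≠ ⊤) (hg : ∀ᵐ τ ∂μ, ∀ᵐ y ∂ν, ‖g τ y‖ₑ ≤ b) :
    ‖∫ τ, ∫ y, k τ y * g τ y ∂ν ∂μ‖ₑ ≤ (∫⁻ τ, ∫⁻ y, ‖k τ y‖ₑ ∂ν ∂μ) * b :=
  calc ‖∫ τ, ∫ y, k τ y * g τ y ∂ν ∂μ‖ₑ ≤ ∫⁻ τ, ‖∫ y, k τ y * g τ y ∂ν‖ₑ ∂μ :=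
        enorm_integral_le_lintegral_enorm _
    _ ≤ ∫⁻ τ, (∫⁻ y, ‖k τ y‖ₑ ∂ν) * b ∂μ :=
        lintegral_mono_ae (hg.mono fun τ hτ => enorm_integral_mul_le (k τ) hb hτ)
    _ = (∫⁻ τ, ∫⁻ y, ‖k τ y‖ₑ ∂ν ∂μ) * b := lintegral_mul_const' b _ hb

end KernelBounds

section RestrictProd

variable {α β : Type*} [MeasurableSpace α] [MeasurableSpace β] {μ : Measure α} {ν : Measure β}

theorem ae_fst_mem_restrict_prod {s : Set α} (hs : MeasurableSet s) :
    ∀ᵐ q ∂(μ.restrict s).prod ν, q.1 ∈ s :=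
  Measure.quasiMeasurePreserving_fst.ae (ae_restrict_mem hs)

theorem ae_ae_restrict_of_ae_restrict_prod [SFinite ν] {s t : Set α} (hst : s ⊆ t)
    {P : α × β → Prop} (h : ∀ᵐ q ∂(μ.restrict t).prod ν, P q) :
    ∀ᵐ τ ∂μ.restrict s, ∀ᵐ y ∂ν, P (τ, y) :=
  Measure.ae_ae_of_ae_prod (ae_mono (Measure.prod_mono (Measure.restrict_mono hst le_rfl) le_rfl) h)

end RestrictProd

theorem abs_le_of_abs_sub_le_of_abs_le_mul_rpow {F G : ℝ → ℝ} {C p M ε z : ℝ} (hC : 0 ≤ C)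
    (hp : 0 ≤ p) (hF : |F z| ≤ C * |z| ^ p) (hFG : |F z - G z| ≤ ε) (hz : |z| ≤ M) :
    |G z| ≤ C * M ^ p + ε :=
  calc |G z| ≤ |F z| + |F z - G z| := by simpa using abs_sub (F z) (F z - G z)
    _ ≤ C * M ^ p + ε := by
      gcongr
      exact hF.trans (by gcongr)

theorem enorm_le_ofReal_of_abs_le {G : ℝ → ℝ} {M c z : ℝ} (hM : 0 ≤ M)
    (hG : ∀ z, |z| ≤ M → |G z| ≤ c) (hz : ‖z‖ₑ ≤ ENNReal.ofReal M) :
    ‖G z‖ₑ ≤ ENNReal.ofReal c := by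
  rw [Real.enorm_eq_ofReal_abs, ofReal_le_ofReal_iff hM] at hz
  rw [Real.enorm_eq_ofReal_abs]
  exact ofReal_le_ofReal (hG z hz)

theorem net_map_self_mapping_general
    {d : ℕ} (D : Set (Esp d))
    (T C_L R M' C_F p ε : ℝ) (hT : 0 < T) (hCL : 0 < C_L) (hR : 0 < R) (hM' : 0 < M')
    (hCF : 0 < C_F) (hp : 1 < p) (hε : ε ∈ Ioc (0 : ℝ) 1)
    (F : ℝ → ℝ) (hF : ∀ z : ℝ, |F z| ≤ C_F * |z| ^ p)
    (F_net : ℝ → ℝ)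
    (hFnet : ∀ z : ℝ, |z| ≤ M' → |F z - F_net z| ≤ ε)
    (G_N : ℝ → Esp d → Esp d → ℝ)
    (hG1 : essSup
        (fun q : ℝ × Esp d =>
          ∫⁻ τ in Ioo (0 : ℝ) q.1, ∫⁻ y in D, (‖G_N (q.1 - τ) q.2 y‖₊ : ℝ≥0∞))
        (prodTD D T) ≤ ENNReal.ofReal (2 * C_L * T))
    (hG2 : essSup (fun q : ℝ × Esp d => ∫⁻ y in D, (‖G_N q.1 q.2 y‖₊ : ℝ≥0∞)) (prodTD D T) ≤
      ENNReal.ofReal (2 * C_L))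
    (hsmall : 2 * C_L * R + 2 * C_L * T * (1 + C_F * M' ^ p) ≤ M') :
    ∀ u₀ : Esp d → ℝ, Measurable u₀ → lqNorm D ⊤ u₀ ≤ ENNReal.ofReal R →
      ∀ u : ℝ → Esp d → ℝ, Measurable (Function.uncurry u) →
        essSupNorm D T u ≤ ENNReal.ofReal M' →
        essSupNorm D T (duhamel D G_N F_net u₀ u) ≤ ENNReal.ofReal M' := by
  intro u₀ _ hu₀ u _ hu
  rw [essSupNorm, prodTD] at hu
  set c := 1 + C_F * M' ^ p
  have hu₀_le : ∀ᵐ y ∂volume.restrict D, ‖u₀ y‖ₑ ≤ ENNReal.ofReal R :=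
    ae_le_of_essSup_le (by rwa [lqNorm, eLp, if_pos rfl] at hu₀)
  have hFnet_le : ∀ z, |z| ≤ M' → |F_net z| ≤ c := fun z hz =>
    (abs_le_of_abs_sub_le_of_abs_le_mul_rpow hCF.le (by linarith) (hF z)
      ((hFnet z hz).trans hε.2) hz).trans_eq (add_comm _ _)
  have hFu_le : ∀ t ≤ T, ∀ᵐ τ ∂volume.restrict (Ioo 0 t), ∀ᵐ y ∂volume.restrict D,
      ‖F_net (u τ y)‖ₑ ≤ ENNReal.ofReal c := fun t ht =>
    (ae_ae_restrict_of_ae_restrict_prod (Ioo_subset_Ioo_right ht) (ae_le_of_essSup_le hu)).mono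
      fun _ hτ => hτ.mono fun _ hy => enorm_le_ofReal_of_abs_le hM'.le hFnet_le hy
  refine essSup_le_of_ae_le _ ?_
  filter_upwards [ae_le_of_essSup_le hG1, ae_le_of_essSup_le hG2,
    ae_fst_mem_restrict_prod (ν := volume.restrict D) measurableSet_Ioo] with ⟨t, x⟩ hG1tx hG2tx ht
  calc ‖duhamel D G_N F_net u₀ u t x‖ₑ
      ≤ ‖∫ y in D, G_N t x y * u₀ y‖ₑ +
          ‖∫ τ in Ioo 0 t, ∫ y in D, G_N (t - τ) x y * F_net (u τ y)‖ₑ := enorm_add_le _ _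
    _ ≤ ENNReal.ofReal (2 * C_L) * ENNReal.ofReal R +
          ENNReal.ofReal (2 * C_L * T) * ENNReal.ofReal c := by
      gcongr
      · exact (enorm_integral_mul_le _ ofReal_ne_top hu₀_le).trans (by gcongr; exact hG2tx)
      · exact (enorm_integral_integral_mul_le (fun τ y => G_N (t - τ) x y) ofReal_ne_top
          (hFu_le t ht.2.le)).trans (by gcongr; exact hG1tx)
    _ = ENNReal.ofReal (2 * C_L * R + 2 * C_L * T * c) := by
      rw [← ofReal_mul (by positivity), ← ofReal_mul (by positivity),
        ← ofReal_add (by positivity) (by positivity)]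
    _ ≤ ENNReal.ofReal M' := ofReal_le_ofReal hsmall

/-- the map `Φ_{N,net}` with approximate nonlinearity maps the ball
`B_{L^∞(0,T;L^∞)}(M')` into itself. -/
theorem net_map_self_mapping
    {d : ℕ} (hd : 1 ≤ d) (D : Set (Esp d)) (hDmeas : MeasurableSet D)
    (hDbdd : Bornology.IsBounded D) (hDpos : 0 < volume D) (hDfin : volume D ≠ ⊤)
    (T C_L R M' C_F p ε : ℝ) (hT : 0 < T) (hCL : 0 < C_L) (hR : 0 < R) (hM' : 0 < M')
    (hCF : 0 < C_F) (hp : 1 < p) (hε : ε ∈ Ioc (0 : ℝ) 1)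
    (F : ℝ → ℝ) (hF : ∀ z : ℝ, |F z| ≤ C_F * |z| ^ p)
    (F_net : ℝ → ℝ) (hFnetm : Measurable F_net)
    (hFnet : ∀ z : ℝ, |z| ≤ M' → |F z - F_net z| ≤ ε)
    (G_N : ℝ → Esp d → Esp d → ℝ)
    (hG1 : essSup
        (fun q : ℝ × Esp d =>
          ∫⁻ τ in Ioo (0 : ℝ) q.1, ∫⁻ y in D, (‖G_N (q.1 - τ) q.2 y‖₊ : ℝ≥0∞))
        (prodTD D T) ≤ ENNReal.ofReal (2 * C_L * T))
    (hG2 : essSup (fun q : ℝ × Esp d => ∫⁻ y in D, (‖G_N q.1 q.2 y‖₊ : ℝ≥0∞)) (prodTD D T) ≤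
      ENNReal.ofReal (2 * C_L))
    (hsmall : 2 * C_L * R + 2 * C_L * T * (1 + C_F * M' ^ p) ≤ M') :
    ∀ u₀ : Esp d → ℝ, Measurable u₀ → lqNorm D ⊤ u₀ ≤ ENNReal.ofReal R →
      ∀ u : ℝ → Esp d → ℝ, Measurable (Function.uncurry u) →
        essSupNorm D T u ≤ ENNReal.ofReal M' →
        essSupNorm D T (duhamel D G_N F_net u₀ u) ≤ ENNReal.ofReal M' :=
  net_map_self_mapping_general D T C_L R M' C_F p ε hT hCL hR hM' hCF hp hε F hF F_net hFnet G_N hG1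
    hG2 hsmall
end
end

section
/- (Quantitative approximation of the solution by approximate Picard iteration, kernel form of the main theorem.) Let d ≥ 1, let D ⊆ ℝ^d be a bounded measurable set with positive finite Lebesgue measure |D|, and let T ∈ (0,1], R, M, M' > 0, δ ∈ (0,1), ε ∈ (0,1). Let r, s ∈ [1,∞] with Hölder conjugates r', s'. Let F : ℝ → ℝ satisfy |F(z)| ≤ C_F |z|^p for all z (p > 1, C_F > 0), let F_net : ℝ → ℝ be measurable with sup_{|z| ≤ M'} |F(z) − F_net(z)| ≤ ε, and let G, G_N : (0,T)×D×D → ℝ be measurable kernels. Let u₀ ∈ L^∞(D) with ‖u₀‖_{L^∞} ≤ R, and assume: (a) the Duhamel map Φ_{u₀} with kernel G and nonlinearity F maps B_{L^r(0,T;L^s)}(M) into itself, is a δ-contraction for the L^r(0,T;L^s) norm there, and has fixed point u in this ball; (b) Φ_{N,net,u₀}, the map with kernel G_N and nonlinearity F_net, maps B_{L^∞(0,T;L^∞)}(M') into itself; (c) T^{1/r} |D|^{1/s} M' ≤ M (so B_{L^∞(0,T;L^∞)}(M') ⊆ B_{L^r(0,T;L^s)}(M)); (d) there is a constant c > 0 such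 that ‖Φ_{u₀}[v] − Φ_{N,net,u₀}[v]‖_{L^r(0,T;L^s)} ≤ c ε for every v ∈ B_{L^∞(0,T;L^∞)}(M'). Set J := ⌈log(1/ε)/log(1/δ)⌉. Then ‖u − Φ_{N,net,u₀}^{[J]}[0]‖_{L^r(0,T;L^s)} ≤ (M + c/(1 − δ)) ε. -/
open MeasureTheory ENNReal Set Filter

noncomputable section

/-!
The iterates `w j = Φ_{N,net}^[j] 0` stay in the `L^∞` ball of radius `M'`, hence by (c) in the
`L^r L^s` ball of radius `M` on which `Φ` is a `δ`-contraction. As `u = Φ u` almost everywhere,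
`‖u - w (j+1)‖ ≤ ‖Φ u - Φ (w j)‖ + ‖Φ (w j) - Φ_{N,net} (w j)‖ ≤ δ ‖u - w j‖ + c ε`, so
`‖u - w J‖ ≤ δ^J M + c ε / (1 - δ)`, and `δ^J ≤ ε` by the choice of `J`.
-/

theorem measurable_essSup_prod_right {α β : Type*} [MeasurableSpace α] [MeasurableSpace β]
    {ν : Measure β} [SFinite ν] {f : α × β → ℝ≥0∞} (hf : Measurable f) :
    Measurable fun a => essSup (fun b => f (a, b)) ν := by
  refine measurable_of_Ioi fun c => ?_
  have hlt : ∀ a, c < essSup (fun b => f (a, b)) ν ↔ ν {b | c < f (a, b)} ≠ 0 := fun a => by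
    have hnull : ν {b | c < f (a, b)} = 0 ↔ ∀ᵐ b ∂ν, f (a, b) ≤ c := by
      simp only [ae_iff, not_le]
    rw [← not_le, not_iff_not, hnull]
    exact ⟨fun h => (ae_le_essSup _).mono fun b hb => hb.trans h,
      fun h => essSup_le_of_ae_le c h⟩
  simp only [preimage, mem_Ioi, hlt]
  exact measurable_measure_prodMk_left (measurableSet_lt measurable_const hf)
    (measurableSet_singleton 0).compl

theorem Measurable.eLpNorm_prod_right {α β E : Type*} [MeasurableSpace α] [MeasurableSpace β]
    [NormedAddCommGroup E] [MeasurableSpace E] [OpensMeasurableSpace E]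
    {ν : Measure β} [SFinite ν] {f : α → β → E} (hf : Measurable (Function.uncurry f))
    (p : ℝ≥0∞) : Measurable fun a => eLpNorm (f a) p ν := by
  rcases eq_or_ne p 0 with rfl | hp₀
  · simp only [eLpNorm_exponent_zero, measurable_const]
  rcases eq_or_ne p ⊤ with rfl | hp
  · simp only [eLpNorm_exponent_top, eLpNormEssSup]
    exact measurable_essSup_prod_right (f := fun z => ‖Function.uncurry f z‖ₑ) hf.enorm
  · simp only [eLpNorm_eq_lintegral_rpow_enorm_toReal hp₀ hp]
    exact (Measurable.lintegral_prod_right' (hf.enorm.pow_const _)).pow_const _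

section MixedNorm

variable {α : Type*} [MeasurableSpace α] {μ : Measure α} {q : ℝ≥0∞}

theorem eLp_eq_eLpNorm (hq : q ≠ 0) (f : α → ℝ≥0∞) : eLp μ q f = eLpNorm f q μ := by
  simp [eLp, eLpNorm, eLpNorm', eLpNormEssSup, hq]

variable {d : ℕ} {D : Set (Esp d)} {T : ℝ} {r s : ℝ≥0∞}

theorem lqNorm_eq_eLpNorm (hs : s ≠ 0) (f : Esp d → ℝ) :
    lqNorm D s f = eLpNorm f s (volume.restrict D) := by
  rw [lqNorm, eLp_eq_eLpNorm hs, ← eLpNorm_enorm]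
  rfl

theorem mixedNorm_eq_eLpNorm (hr : r ≠ 0) (hs : s ≠ 0) (u : ℝ → Esp d → ℝ) :
    mixedNorm D T r s u = eLpNorm (fun t => eLpNorm (u t) s (volume.restrict D)) r
      (volume.restrict (Ioo 0 T)) := by
  simp only [mixedNorm, eLp_eq_eLpNorm hr, lqNorm_eq_eLpNorm hs]

theorem invE_eq_toReal_inv (q : ℝ≥0∞) : invE q = q.toReal⁻¹ := by
  rw [invE, one_div, ENNReal.toReal_inv]

theorem mixedNorm_congr_ae (hr : r ≠ 0) (hs : s ≠ 0) {u v : ℝ → Esp d → ℝ}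
    (h : ∀ᵐ q ∂prodTD D T, u q.1 q.2 = v q.1 q.2) :
    mixedNorm D T r s u = mixedNorm D T r s v := by
  rw [mixedNorm_eq_eLpNorm hr hs, mixedNorm_eq_eLpNorm hr hs]
  exact eLpNorm_congr_ae ((Measure.ae_ae_of_ae_prod h).mono fun t ht => eLpNorm_congr_ae ht)

theorem mixedNorm_sub_le_add (hr : 1 ≤ r) (hs : 1 ≤ s) {u v w : ℝ → Esp d → ℝ}
    (hu : Measurable (Function.uncurry u)) (hv : Measurable (Function.uncurry v))
    (hw : Measurable (Function.uncurry w)) :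
    mixedNorm D T r s (fun t x => u t x - w t x) ≤
      mixedNorm D T r s (fun t x => u t x - v t x) +
        mixedNorm D T r s (fun t x => v t x - w t x) := by
  have huv : Measurable (Function.uncurry fun t x => u t x - v t x) := hu.sub hv
  have hvw : Measurable (Function.uncurry fun t x => v t x - w t x) := hv.sub hw
  have hinner : ∀ t, eLpNorm (fun x => u t x - w t x) s (volume.restrict D) ≤
      eLpNorm (fun x => u t x - v t x) s (volume.restrict D) +
        eLpNorm (fun x => v t x - w t x) s (volume.restrict D) := fun t => by
    have hsplit : (fun x => u t x - w t x) =
        (fun x => u t x - v t x) + fun x => v t x - w t x := by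
      funext x
      simp only [Pi.add_apply, sub_add_sub_cancel]
    rw [hsplit]
    exact eLpNorm_add_le (huv.of_uncurry_left (x := t)).aestronglyMeasurable
      (hvw.of_uncurry_left (x := t)).aestronglyMeasurable hs
  simp only [mixedNorm_eq_eLpNorm (one_pos.trans_le hr).ne' (one_pos.trans_le hs).ne']
  refine (eLpNorm_mono_enorm_ae (ae_of_all _ fun t => ?_)).trans
    (eLpNorm_add_le (huv.eLpNorm_prod_right s).aestronglyMeasurable
      (hvw.eLpNorm_prod_right s).aestronglyMeasurable hr)
  simpa only [enorm_eq_self, Pi.add_apply] using hinner t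

theorem mixedNorm_le_ofReal_rpow_mul_essSupNorm (hr : r ≠ 0) (hs : s ≠ 0)
    (u : ℝ → Esp d → ℝ) :
    mixedNorm D T r s u ≤
      ENNReal.ofReal T ^ invE r * volume D ^ invE s * essSupNorm D T u := by
  have hbound : ∀ᵐ t ∂volume.restrict (Ioo 0 T), ∀ᵐ x ∂volume.restrict D,
      ‖u t x‖ₑ ≤ essSupNorm D T u :=
    Measure.ae_ae_of_ae_prod (ae_le_essSup fun q : ℝ × Esp d => (‖u q.1 q.2‖₊ : ℝ≥0∞))
  have hinner : ∀ᵐ t ∂volume.restrict (Ioo 0 T),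
      ‖eLpNorm (u t) s (volume.restrict D)‖ₑ ≤ volume D ^ invE s * essSupNorm D T u :=
    hbound.mono fun t ht => by
      simpa [invE_eq_toReal_inv, mul_comm] using eLpNorm_le_of_ae_enorm_bound ht
  rw [mixedNorm_eq_eLpNorm hr hs]
  refine (eLpNorm_le_of_ae_enorm_bound (p := r) hinner).trans_eq ?_
  simp only [invE_eq_toReal_inv, smul_eq_mul, Measure.restrict_apply_univ, Real.volume_Ioo,
    sub_zero]
  ring

theorem mixedNorm_le_ofReal_of_essSupNorm_le (hr : r ≠ 0) (hs : s ≠ 0) (hT : 0 ≤ T)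
    (hD : volume D ≠ ⊤) {u : ℝ → Esp d → ℝ} {K : ℝ} (hu : essSupNorm D T u ≤ ENNReal.ofReal K) :
    mixedNorm D T r s u ≤ ENNReal.ofReal (T ^ invE r * (volume D).toReal ^ invE s * K) := by
  have hinvE : ∀ q, 0 ≤ invE q := fun q => ENNReal.toReal_nonneg
  refine (mixedNorm_le_ofReal_rpow_mul_essSupNorm hr hs u).trans ?_
  rw [← ENNReal.ofReal_toReal hD, ENNReal.ofReal_rpow_of_nonneg hT (hinvE r),
    ENNReal.ofReal_rpow_of_nonneg ENNReal.toReal_nonneg (hinvE s),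
    ENNReal.toReal_ofReal ENNReal.toReal_nonneg, ENNReal.ofReal_mul (by positivity),
    ENNReal.ofReal_mul (by positivity)]
  gcongr

end MixedNorm

theorem le_pow_mul_add_mul_geom_sum {R : Type*} [CommSemiring R] [PartialOrder R]
    [IsOrderedRing R] {a : ℕ → R} {δ η : R} (hδ : 0 ≤ δ)
    (h : ∀ n, a (n + 1) ≤ δ * a n + η) (n : ℕ) :
    a n ≤ δ ^ n * a 0 + η * ∑ i ∈ Finset.range n, δ ^ i := by
  induction n with
  | zero => simp
  | succ n ih =>
    calc a (n + 1) ≤ δ * (δ ^ n * a 0 + η * ∑ i ∈ Finset.range n, δ ^ i) + η :=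
          (h n).trans (add_le_add_left (mul_le_mul_of_nonneg_left ih hδ) η)
      _ = δ ^ (n + 1) * a 0 + η * ∑ i ∈ Finset.range (n + 1), δ ^ i := by
          rw [geom_sum_succ]; ring

theorem pow_ceil_log_div_log_le {δ ε : ℝ} (hδ₀ : 0 < δ) (hδ₁ : δ < 1) (hε : 0 < ε) :
    δ ^ ⌈Real.log (1 / ε) / Real.log (1 / δ)⌉₊ ≤ ε := by
  set J := ⌈Real.log (1 / ε) / Real.log (1 / δ)⌉₊
  have hlogδ : 0 < Real.log (1 / δ) := Real.log_pos (one_lt_one_div hδ₀ hδ₁)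
  have hJ : Real.log (1 / ε) ≤ J * Real.log (1 / δ) :=
    (div_le_iff₀ hlogδ).mp (Nat.le_ceil _)
  rw [one_div, one_div, Real.log_inv, Real.log_inv] at hJ
  rw [← Real.log_le_log_iff (pow_pos hδ₀ J) hε, Real.log_pow]
  linarith

theorem ofReal_pow_mul_add_mul_geom_sum_le {δ ε M c : ℝ} (hδ₀ : 0 ≤ δ) (hδ₁ : δ < 1)
    (hε : 0 ≤ ε) (hM : 0 ≤ M) (hc : 0 ≤ c) {J : ℕ} (hJ : δ ^ J ≤ ε) :
    ENNReal.ofReal δ ^ J * ENNReal.ofReal M +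
        ENNReal.ofReal (c * ε) * ∑ i ∈ Finset.range J, ENNReal.ofReal δ ^ i ≤
      ENNReal.ofReal ((M + c / (1 - δ)) * ε) := by
  have hgeom : ∑ i ∈ Finset.range J, δ ^ i ≤ 1 / (1 - δ) := by
    simpa [← Finset.range_eq_Ico] using geom_sum_Ico_le_of_lt_one (m := 0) (n := J) hδ₀ hδ₁
  simp only [← ENNReal.ofReal_pow hδ₀]
  rw [← ENNReal.ofReal_sum_of_nonneg fun i _ => pow_nonneg hδ₀ i,
    ← ENNReal.ofReal_mul (by positivity), ← ENNReal.ofReal_mul (by positivity),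
    ← ENNReal.ofReal_add (by positivity) (by positivity)]
  refine ENNReal.ofReal_le_ofReal ?_
  calc δ ^ J * M + c * ε * ∑ i ∈ Finset.range J, δ ^ i ≤ ε * M + c * ε * (1 / (1 - δ)) := by
        gcongr
    _ = (M + c / (1 - δ)) * ε := by ring

theorem quantitative_approximation_by_approximate_picard_general
    {d : ℕ} (D : Set (Esp d)) (hDfin : volume D ≠ ⊤)
    (T M M' δ ε : ℝ) (hT : T ∈ Ioc (0 : ℝ) 1) (hM : 0 < M)
    (hδ : δ ∈ Ioo (0 : ℝ) 1) (hε : ε ∈ Ioo (0 : ℝ) 1)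
    (r s : ℝ≥0∞) (hr : 1 ≤ r) (hs : 1 ≤ s)
    (F F_net : ℝ → ℝ)
    (G G_N : ℝ → Esp d → Esp d → ℝ)
    (u₀ : Esp d → ℝ)
    -- (a) `Φ_{u₀}` maps `B_{L^r L^s}(M)` into itself and is a `δ`-contraction there
    (hself : ∀ v : ℝ → Esp d → ℝ, Measurable (Function.uncurry v) →
      mixedNorm D T r s v ≤ ENNReal.ofReal M →
      Measurable (Function.uncurry (duhamel D G F u₀ v)) ∧
        mixedNorm D T r s (duhamel D G F u₀ v) ≤ ENNReal.ofReal M)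
    (hcontr : ∀ v₁ v₂ : ℝ → Esp d → ℝ,
      Measurable (Function.uncurry v₁) → Measurable (Function.uncurry v₂) →
      mixedNorm D T r s v₁ ≤ ENNReal.ofReal M → mixedNorm D T r s v₂ ≤ ENNReal.ofReal M →
      mixedNorm D T r s (fun t x => duhamel D G F u₀ v₁ t x - duhamel D G F u₀ v₂ t x) ≤
        ENNReal.ofReal δ * mixedNorm D T r s (fun t x => v₁ t x - v₂ t x))
    -- ... with fixed point `u` in that ball
    (u : ℝ → Esp d → ℝ) (hum : Measurable (Function.uncurry u))
    (huM : mixedNorm D T r s u ≤ ENNReal.ofReal M)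
    (hufix : ∀ᵐ q ∂prodTD D T, u q.1 q.2 = duhamel D G F u₀ u q.1 q.2)
    -- (b) `Φ_{N,net,u₀}` maps `B_{L^∞ L^∞}(M')` into itself
    (hselfnet : ∀ v : ℝ → Esp d → ℝ, Measurable (Function.uncurry v) →
      essSupNorm D T v ≤ ENNReal.ofReal M' →
      Measurable (Function.uncurry (duhamel D G_N F_net u₀ v)) ∧
        essSupNorm D T (duhamel D G_N F_net u₀ v) ≤ ENNReal.ofReal M')
    -- (c) the `L^∞` ball embeds in the `L^r L^s` ball
    (hcap : T ^ invE r * (volume D).toReal ^ invE s * M' ≤ M)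
    -- (d) the two maps are `c ε`-close on the `L^∞` ball
    (c : ℝ) (hc : 0 < c)
    (hclose : ∀ v : ℝ → Esp d → ℝ, Measurable (Function.uncurry v) →
      essSupNorm D T v ≤ ENNReal.ofReal M' →
      mixedNorm D T r s
          (fun t x => duhamel D G F u₀ v t x - duhamel D G_N F_net u₀ v t x) ≤
        ENNReal.ofReal (c * ε))
    (J : ℕ) (hJ : J = ⌈Real.log (1 / ε) / Real.log (1 / δ)⌉₊) :
    mixedNorm D T r s
        (fun t x => u t x - (duhamel D G_N F_net u₀)^[J] (fun _ _ => 0) t x) ≤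
      ENNReal.ofReal ((M + c / (1 - δ)) * ε) := by
  obtain ⟨hδ₀, hδ₁⟩ := hδ
  have hε₀ : 0 < ε := hε.1
  have hr₀ : r ≠ 0 := (one_pos.trans_le hr).ne'
  have hs₀ : s ≠ 0 := (one_pos.trans_le hs).ne'
  set Ψ := duhamel D G_N F_net u₀
  set B : Set (ℝ → Esp d → ℝ) :=
    {v | Measurable (Function.uncurry v) ∧ essSupNorm D T v ≤ ENNReal.ofReal M'}
  have hΨB : MapsTo Ψ B B := fun v hv => hselfnet v hv.1 hv.2
  have hzero : (fun _ _ => 0 : ℝ → Esp d → ℝ) ∈ B :=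
    ⟨measurable_const, essSup_le_of_ae_le _ (ae_of_all _ fun _ => by simp)⟩
  have hBM : ∀ v ∈ B, mixedNorm D T r s v ≤ ENNReal.ofReal M := fun v hv =>
    (mixedNorm_le_ofReal_of_essSupNorm_le hr₀ hs₀ hT.1.le hDfin hv.2).trans
      (ENNReal.ofReal_le_ofReal hcap)
  have hstep : ∀ v ∈ B, mixedNorm D T r s (fun t x => u t x - Ψ v t x) ≤
      ENNReal.ofReal δ * mixedNorm D T r s (fun t x => u t x - v t x) +
        ENNReal.ofReal (c * ε) := fun v hv =>
    calc mixedNorm D T r s (fun t x => u t x - Ψ v t x)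
        = mixedNorm D T r s (fun t x => duhamel D G F u₀ u t x - Ψ v t x) :=
          mixedNorm_congr_ae hr₀ hs₀ (hufix.mono fun q hq => by rw [hq])
      _ ≤ _ := mixedNorm_sub_le_add hr hs (hself u hum huM).1 (hself v hv.1 (hBM v hv)).1
          (hΨB hv).1
      _ ≤ _ := add_le_add (hcontr u v hum hv.1 huM (hBM v hv)) (hclose v hv.1 hv.2)
  have hiter := le_pow_mul_add_mul_geom_sum
    (a := fun n => mixedNorm D T r s (fun t x => u t x - Ψ^[n] (fun _ _ => 0) t x))
    (δ := ENNReal.ofReal δ) (η := ENNReal.ofReal (c * ε)) (by positivity)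
    (fun n => by
      simp only [Function.iterate_succ_apply']
      exact hstep _ (hΨB.iterate n hzero)) J
  have hδJ : δ ^ J ≤ ε := hJ ▸ pow_ceil_log_div_log_le hδ₀ hδ₁ hε₀
  calc _ ≤ ENNReal.ofReal δ ^ J * mixedNorm D T r s u +
        ENNReal.ofReal (c * ε) * ∑ i ∈ Finset.range J, ENNReal.ofReal δ ^ i := by
        simpa only [Function.iterate_zero_apply, sub_zero] using hiter
    _ ≤ _ := by grw [huM]
    _ ≤ _ := ofReal_pow_mul_add_mul_geom_sum_le hδ₀.le hδ₁ hε₀.le hM.le hc.le hδJ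

/-- quantitative approximation of the solution by the approximate Picard
iteration (kernel form of the main theorem). -/
theorem quantitative_approximation_by_approximate_picard
    {d : ℕ} (hd : 1 ≤ d) (D : Set (Esp d)) (hDmeas : MeasurableSet D)
    (hDbdd : Bornology.IsBounded D) (hDpos : 0 < volume D) (hDfin : volume D ≠ ⊤)
    (T R M M' δ ε : ℝ) (hT : T ∈ Ioc (0 : ℝ) 1) (hR : 0 < R) (hM : 0 < M) (hM' : 0 < M')
    (hδ : δ ∈ Ioo (0 : ℝ) 1) (hε : ε ∈ Ioo (0 : ℝ) 1)
    (r s r' s' : ℝ≥0∞) (hr : 1 ≤ r) (hs : 1 ≤ s)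
    (hr' : 1 / r + 1 / r' = 1) (hs' : 1 / s + 1 / s' = 1)
    (F F_net : ℝ → ℝ) (C_F p : ℝ) (hCF : 0 < C_F) (hp : 1 < p)
    (hF : ∀ z : ℝ, |F z| ≤ C_F * |z| ^ p)
    (hFnetm : Measurable F_net) (hFnet : ∀ z : ℝ, |z| ≤ M' → |F z - F_net z| ≤ ε)
    (G G_N : ℝ → Esp d → Esp d → ℝ)
    (hGm : Measurable fun q : ℝ × Esp d × Esp d => G q.1 q.2.1 q.2.2)
    (hGNm : Measurable fun q : ℝ × Esp d × Esp d => G_N q.1 q.2.1 q.2.2)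
    (u₀ : Esp d → ℝ) (hu₀m : Measurable u₀) (hu₀R : lqNorm D ⊤ u₀ ≤ ENNReal.ofReal R)
    -- (a) `Φ_{u₀}` maps `B_{L^r L^s}(M)` into itself and is a `δ`-contraction there
    (hself : ∀ v : ℝ → Esp d → ℝ, Measurable (Function.uncurry v) →
      mixedNorm D T r s v ≤ ENNReal.ofReal M →
      Measurable (Function.uncurry (duhamel D G F u₀ v)) ∧
        mixedNorm D T r s (duhamel D G F u₀ v) ≤ ENNReal.ofReal M)
    (hcontr : ∀ v₁ v₂ : ℝ → Esp d → ℝ,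
      Measurable (Function.uncurry v₁) → Measurable (Function.uncurry v₂) →
      mixedNorm D T r s v₁ ≤ ENNReal.ofReal M → mixedNorm D T r s v₂ ≤ ENNReal.ofReal M →
      mixedNorm D T r s (fun t x => duhamel D G F u₀ v₁ t x - duhamel D G F u₀ v₂ t x) ≤
        ENNReal.ofReal δ * mixedNorm D T r s (fun t x => v₁ t x - v₂ t x))
    -- ... with fixed point `u` in that ball
    (u : ℝ → Esp d → ℝ) (hum : Measurable (Function.uncurry u))
    (huM : mixedNorm D T r s u ≤ ENNReal.ofReal M)
    (hufix : ∀ᵐ q ∂prodTD D T, u q.1 q.2 = duhamel D G F u₀ u q.1 q.2)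
    -- (b) `Φ_{N,net,u₀}` maps `B_{L^∞ L^∞}(M')` into itself
    (hselfnet : ∀ v : ℝ → Esp d → ℝ, Measurable (Function.uncurry v) →
      essSupNorm D T v ≤ ENNReal.ofReal M' →
      Measurable (Function.uncurry (duhamel D G_N F_net u₀ v)) ∧
        essSupNorm D T (duhamel D G_N F_net u₀ v) ≤ ENNReal.ofReal M')
    -- (c) the `L^∞` ball embeds in the `L^r L^s` ball
    (hcap : T ^ invE r * (volume D).toReal ^ invE s * M' ≤ M)
    -- (d) the two maps are `c ε`-close on the `L^∞` ball
    (c : ℝ) (hc : 0 < c)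
    (hclose : ∀ v : ℝ → Esp d → ℝ, Measurable (Function.uncurry v) →
      essSupNorm D T v ≤ ENNReal.ofReal M' →
      mixedNorm D T r s
          (fun t x => duhamel D G F u₀ v t x - duhamel D G_N F_net u₀ v t x) ≤
        ENNReal.ofReal (c * ε))
    (J : ℕ) (hJ : J = ⌈Real.log (1 / ε) / Real.log (1 / δ)⌉₊) :
    mixedNorm D T r s
        (fun t x => u t x - (duhamel D G_N F_net u₀)^[J] (fun _ _ => 0) t x) ≤
      ENNReal.ofReal ((M + c / (1 - δ)) * ε) :=
  quantitative_approximation_by_approximate_picard_general D hDfin T M M' δ ε hT hM hδ hε r s hr hs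
    F F_net G G_N u₀ hself hcontr u hum huM hufix hselfnet hcap c hc hclose J hJ
end
end
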